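/- Let f : [0,∞] → [0,∞] be ISOD and let r = inf{x ∈ [0,∞] : f(x) < x} (with r = ∞ if this set is empty). Then B_f = B_g, where g : [0,∞] → [0,∞] is the function g(x) = min{f(x), r}. -/

import Mathlib

open MeasureTheory ENNReal Filter

noncomputable section

/-- The Hilbert space `L²(ℝ)` with Lebesgue measure. -/
abbrev L2R : Type := MeasureTheory.Lp ℂ 2 (MeasureTheory.volume : MeasureTheory.Measure ℝ)

/-- The Lebesgue measure of the support of (a representative of) `ξ ∈ L²(ℝ)`. -/
def musupp (ξ : L2R) : ℝ≥0∞ := MeasureTheory.volume (Function.support (ξ : ℝ → ℂ))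

/-- The support expansion function `Φ_a` of a bounded operator `a` on `L²(ℝ)`:
`Φ_a(x) = sup { μ(supp(aξ)) : μ(supp ξ) ≤ x }`. -/
def Phi (a : L2R →L[ℂ] L2R) (x : ℝ≥0∞) : ℝ≥0∞ :=
  ⨆ ξ : {ξ : L2R // musupp ξ ≤ x}, musupp (a ξ.1)

/-- The set `B_f` of operators controlled by `f`: both `Φ_a ≤ f` and `Φ_{a*} ≤ f`. -/
def Bset (f : ℝ≥0∞ → ℝ≥0∞) : Set (L2R →L[ℂ] L2R) :=
  {a | (∀ x, Phi a x ≤ f x) ∧ (∀ x, Phi (ContinuousLinearMap.adjoint a) x ≤ f x)}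

/-- `f : [0,∞] → [0,∞]` is ISOD: increasing, `f 0 = 0`, `f ∞ = sup_{t<∞} f t`, and the
slope to the origin `f x / x` is decreasing: `x * f y ≤ y * f x` for `0 < x ≤ y < ∞`. -/
def ISOD (f : ℝ≥0∞ → ℝ≥0∞) : Prop :=
  Monotone f ∧ f 0 = 0 ∧ (f ⊤ = ⨆ t ∈ Set.Iio (⊤ : ℝ≥0∞), f t) ∧
  ∀ x y : ℝ≥0∞, 0 < x → x ≤ y → y < ⊤ → x * f y ≤ y * f x

/-! As `B_g ⊆ B_f` and `B_f` is closed under adjoints, it suffices that `a ∈ B_f` forces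
`μ(supp aξ) ≤ r` for every `ξ`. If instead `μ(supp aξ) > t > f t`, pick `S ⊆ supp aξ` of finite
measure `s ≥ t`; since `f x / x` decreases, `f s < s`. The supports of the vectors `a* η` with `η`
supported in `S` have measure at most `f s`, and they are closed under unions up to null sets
(`supp (u + c v)` contains `supp u ∪ supp v` a.e. for all but countably many real `c`), so they
all lie a.e. in one set `T` with `μ T ≤ f s`. By duality `1_S a 1_{Tᶜ} = 0`, so on `S` the
function `aξ` agrees with `a (1_T ξ)`, whose support has measure at most
`f (f s) ≤ f s < s = μ S`. -/

open Function Set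

section SupportsUpToNullSets

variable {α : Type*} [MeasurableSpace α] {μ : Measure α}

theorem exists_support_union_ae_le_support_add_smul {E 𝕜 : Type*} [RCLike 𝕜]
    [NormedAddCommGroup E] [NormedSpace 𝕜 E] [SFinite μ] {g₁ g₂ : α → E}
    (h₁ : StronglyMeasurable g₁) (h₂ : StronglyMeasurable g₂) :
    ∃ c : 𝕜, (support g₁ ∪ support g₂ : Set α) ≤ᵐ[μ] support (g₁ + c • g₂) := by
  -- where `g₂ x ≠ 0`, at most one `c` makes `g₁ x + c • g₂ x` vanish
  set N : ℝ → Set α := fun c => support g₂ \ support (g₁ + (c : 𝕜) • g₂)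
  have hN : ∀ c, MeasurableSet (N c) := fun c =>
    h₂.measurableSet_support.diff (h₁.add (h₂.const_smul _)).measurableSet_support
  have hdisj : Pairwise (Disjoint on N) := by
    refine fun c c' hcc' => Set.disjoint_left.2 fun x ⟨hx₂, hx⟩ ⟨_, hx'⟩ => hcc' ?_
    simp only [mem_support, ne_eq, not_not, Pi.add_apply, Pi.smul_apply] at hx₂ hx hx'
    have : ((c : 𝕜) - c') • g₂ x = 0 := by
      rw [sub_smul]; linear_combination (norm := module) hx - hx'
    exact_mod_cast sub_eq_zero.1 ((smul_eq_zero.1 this).resolve_right hx₂)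
  obtain ⟨c, hc⟩ := ((Measure.countable_meas_pos_of_disjoint_iUnion (μ := μ) hN hdisj).ae_notMem
    volume).exists
  have hNc : ∀ᵐ x ∂μ, x ∉ N c :=
    measure_eq_zero_iff_ae_notMem.1 (nonpos_iff_eq_zero.1 (not_lt.1 hc))
  refine ⟨c, hNc.mono fun x hx hx₁₂ => ?_⟩
  change x ∈ support g₁ ∪ support g₂ at hx₁₂
  change x ∈ support _
  by_cases hx₂ : g₂ x = 0
  · have hx₁ : g₁ x ≠ 0 := by simpa [hx₂] using hx₁₂
    simpa [hx₂] using hx₁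
  · by_contra hsum
    exact hx ⟨hx₂, hsum⟩

theorem exists_measurableSet_ae_le_of_ae_union_closed {𝒜 : Set (Set α)} (hne : 𝒜.Nonempty)
    (hmeas : ∀ A ∈ 𝒜, MeasurableSet A)
    (hunion : ∀ A ∈ 𝒜, ∀ B ∈ 𝒜, ∃ C ∈ 𝒜, (A ∪ B : Set α) ≤ᵐ[μ] C) {c : ℝ≥0∞} (hc : c ≠ ∞)
    (hbound : ∀ A ∈ 𝒜, μ A ≤ c) :
    ∃ T, MeasurableSet T ∧ μ T ≤ c ∧ ∀ A ∈ 𝒜, A ≤ᵐ[μ] T := by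
  set M := sSup (μ '' 𝒜)
  have hle_M : ∀ A ∈ 𝒜, μ A ≤ M := fun A hA => le_sSup (mem_image_of_mem μ hA)
  have hMc : M ≤ c := sSup_le <| forall_mem_image.2 hbound
  obtain ⟨u, -, hu_lim, hu⟩ := exists_seq_tendsto_sSup (hne.image μ) (OrderTop.bddAbove _)
  choose A hA hμA using hu
  have hacc : ∀ B ∈ 𝒜, ∀ n, ∃ C ∈ 𝒜, (B ∪ accumulate A n : Set α) ≤ᵐ[μ] C := by
    intro B hB n
    induction n with
    | zero => simpa using hunion B hB (A 0) (hA 0)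
    | succ n ih =>
      obtain ⟨C, hC, hBC⟩ := ih
      obtain ⟨C', hC', hCC'⟩ := hunion C hC (A (n + 1)) (hA _)
      refine ⟨C', hC', ?_⟩
      rw [accumulate_succ, ← union_assoc]
      exact (hBC.union EventuallyLE.rfl).trans hCC'
  have hBT : ∀ B ∈ 𝒜, μ (B ∪ ⋃ n, A n) ≤ M := by
    intro B hB
    rw [← iUnion_accumulate, union_iUnion, Monotone.measure_iUnion
      fun m n hmn => union_subset_union_right B (monotone_accumulate hmn)]
    refine iSup_le fun n => ?_
    obtain ⟨C, hC, hBC⟩ := hacc B hB n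
    exact (measure_mono_ae hBC).trans (hle_M C hC)
  have hTM : μ (⋃ n, A n) ≤ M := (measure_mono subset_union_right).trans (hBT _ (hA 0))
  have hMT : M ≤ μ (⋃ n, A n) :=
    le_of_tendsto' hu_lim fun n => hμA n ▸ measure_mono (subset_iUnion A n)
  have hTm : MeasurableSet (⋃ n, A n) := MeasurableSet.iUnion fun n => hmeas _ (hA n)
  refine ⟨⋃ n, A n, hTm, hTM.trans hMc, fun B hB => ae_le_set.2 ?_⟩
  rw [← union_sdiff_right, measure_sdiff subset_union_right hTm.nullMeasurableSet
    (hTM.trans_lt (hMc.trans_lt hc.lt_top)).ne]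
  exact tsub_eq_zero_of_le ((hBT B hB).trans hMT)

end SupportsUpToNullSets

namespace MeasureTheory.Lp

variable {α E : Type*} [MeasurableSpace α] {μ : Measure α} {p : ℝ≥0∞} [NormedAddCommGroup E]

section Indicator

variable (𝕜 : Type*) [NormedField 𝕜] [NormedSpace 𝕜 E] {s : Set α}

def indicatorₗ (hs : MeasurableSet s) : Lp E p μ →ₗ[𝕜] Lp E p μ where
  toFun f := ((Lp.memLp f).indicator hs).toLp _
  map_add' f g := by
    rw [← MemLp.toLp_add]
    exact MemLp.toLp_congr _ _
      ((Lp.coeFn_add f g).indicator.trans (.of_eq (indicator_add' s _ _)))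
  map_smul' c f := by
    rw [RingHom.id_apply, ← MemLp.toLp_const_smul]
    exact MemLp.toLp_congr _ _
      ((Lp.coeFn_smul c f).indicator.trans (.of_eq (indicator_const_smul s c _)))

variable {𝕜}

theorem indicatorₗ_apply (hs : MeasurableSet s) (f : Lp E p μ) :
    indicatorₗ 𝕜 hs f = ((Lp.memLp f).indicator hs).toLp _ :=
  rfl

theorem coeFn_indicatorₗ (hs : MeasurableSet s) (f : Lp E p μ) :
    indicatorₗ 𝕜 hs f =ᵐ[μ] s.indicator f := by
  rw [indicatorₗ_apply]
  exact MemLp.coeFn_toLp _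

theorem support_indicatorₗ (hs : MeasurableSet s) (f : Lp E p μ) :
    support (indicatorₗ 𝕜 hs f) =ᵐ[μ] (s ∩ support f : Set α) := by
  rw [← support_indicator]; exact (coeFn_indicatorₗ hs f).support

theorem support_indicatorₗ_ae_le (hs : MeasurableSet s) (f : Lp E p μ) :
    support (indicatorₗ 𝕜 hs f) ≤ᵐ[μ] s :=
  (support_indicatorₗ hs f).le.trans (inter_subset_left (t := support f)).eventuallyLE

theorem indicatorₗ_add_indicatorₗ_compl (hs : MeasurableSet s) (f : Lp E p μ) :
    indicatorₗ 𝕜 hs f + indicatorₗ 𝕜 hs.compl f = f := by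
  ext1
  filter_upwards [Lp.coeFn_add (indicatorₗ 𝕜 hs f) (indicatorₗ 𝕜 hs.compl f),
    coeFn_indicatorₗ (𝕜 := 𝕜) hs f, coeFn_indicatorₗ (𝕜 := 𝕜) hs.compl f] with x hx h₁ h₂
  rw [hx, Pi.add_apply, h₁, h₂, indicator_self_add_compl_apply]

end Indicator

variable {𝕜 : Type*} [RCLike 𝕜] [NormedSpace 𝕜 E]

theorem exists_measurableSet_forall_support_ae_le [SFinite μ] (W : Submodule 𝕜 (Lp E p μ))
    {c : ℝ≥0∞} (hc : c ≠ ∞) (hW : ∀ u ∈ W, μ (support u) ≤ c) :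
    ∃ T, MeasurableSet T ∧ μ T ≤ c ∧ ∀ u ∈ W, support u ≤ᵐ[μ] T := by
  have hunion : ∀ u ∈ W, ∀ v ∈ W, ∃ w ∈ W, (support u ∪ support v : Set α) ≤ᵐ[μ] support w := by
    intro u hu v hv
    obtain ⟨a, ha⟩ := exists_support_union_ae_le_support_add_smul (𝕜 := 𝕜) (μ := μ)
      (Lp.stronglyMeasurable u) (Lp.stronglyMeasurable v)
    exact ⟨u + a • v, W.add_mem hu (W.smul_mem a hv),
      ha.trans ((Lp.coeFn_add u (a • v)).trans
        (EventuallyEq.rfl.add (Lp.coeFn_smul a v))).support.symm.le⟩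
  obtain ⟨T, hT, hTc, hWT⟩ := exists_measurableSet_ae_le_of_ae_union_closed
    (μ := μ) (𝒜 := (fun u : Lp E p μ => support u) '' W) ⟨_, mem_image_of_mem _ W.zero_mem⟩
    (forall_mem_image.2 fun u _ => (Lp.stronglyMeasurable u).measurableSet_support)
    (forall_mem_image.2 fun u hu => forall_mem_image.2 fun v hv => by
      obtain ⟨w, hw, huvw⟩ := hunion u hu v hv
      exact ⟨_, mem_image_of_mem _ hw, huvw⟩) hc
    (forall_mem_image.2 hW)
  exact ⟨T, hT, hTc, fun u hu => hWT _ (mem_image_of_mem _ hu)⟩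

end MeasureTheory.Lp

namespace MeasureTheory.L2

variable {α β E F 𝕜 : Type*} [MeasurableSpace α] [MeasurableSpace β] {μ : Measure α}
  {ν : Measure β} [RCLike 𝕜] [NormedAddCommGroup E] [InnerProductSpace 𝕜 E]
  [NormedAddCommGroup F] [InnerProductSpace 𝕜 F]

theorem inner_eq_zero_of_aedisjoint_support {f g : Lp E 2 μ}
    (h : AEDisjoint μ (support f) (support g)) : inner 𝕜 f g = 0 := by
  rw [L2.inner_def]
  refine integral_eq_zero_of_ae ?_
  filter_upwards [measure_eq_zero_iff_ae_notMem.1 h] with x hx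
  by_cases hf : f x = 0
  · simp [hf]
  · have hg : g x = 0 := by_contra fun hg => hx ⟨hf, hg⟩
    simp [hg]

variable [CompleteSpace E] [CompleteSpace F]

open ContinuousLinearMap in
theorem aedisjoint_support_apply_indicatorₗ_compl (a : Lp E 2 μ →L[𝕜] Lp F 2 ν) {S : Set β}
    {T : Set α} (hS : MeasurableSet S) (hT : MeasurableSet T)
    (h : ∀ η, support (adjoint a (Lp.indicatorₗ 𝕜 hS η)) ≤ᵐ[μ] T) (ξ : Lp E 2 μ) :
    AEDisjoint ν S (support (a (Lp.indicatorₗ 𝕜 hT.compl ξ))) := by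
  set v := a (Lp.indicatorₗ 𝕜 hT.compl ξ)
  set w := Lp.indicatorₗ 𝕜 hS v
  have hww : inner 𝕜 w w = inner 𝕜 w v := by
    conv_rhs => rw [← Lp.indicatorₗ_add_indicatorₗ_compl (𝕜 := 𝕜) hS v]
    rw [inner_add_right, inner_eq_zero_of_aedisjoint_support (aedisjoint_compl_right.mono_ae
      (Lp.support_indicatorₗ_ae_le hS v) (Lp.support_indicatorₗ_ae_le hS.compl v)), add_zero]
  have hwv : inner 𝕜 w v = 0 := by
    rw [← adjoint_inner_left]
    exact inner_eq_zero_of_aedisjoint_support (aedisjoint_compl_right.mono_ae (h v)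
      (Lp.support_indicatorₗ_ae_le hT.compl ξ))
  have hw : w = 0 := inner_self_eq_zero.1 (hww.trans hwv)
  have hw_supp : support w =ᵐ[ν] (∅ : Set β) := by
    rw [hw]
    exact (Lp.coeFn_zero F 2 ν).support.trans (.of_eq support_zero)
  exact ae_eq_empty.1 ((Lp.support_indicatorₗ hS v).symm.trans hw_supp)

end MeasureTheory.L2

theorem ISOD.lt_self_of_le {f : ℝ≥0∞ → ℝ≥0∞} (hf : ISOD f) {t y : ℝ≥0∞} (ht : f t < t)
    (hty : t ≤ y) (hy : y < ⊤) : f y < y := by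
  have ht₀ : t ≠ 0 := ne_bot_of_gt ht
  have ht_top : t ≠ ⊤ := (hty.trans_lt hy).ne
  have hy₀ : y ≠ 0 := (ht₀.bot_lt.trans_le hty).ne'
  rw [← ENNReal.mul_lt_mul_iff_right ht₀ ht_top]
  calc t * f y ≤ y * f t := hf.2.2.2 t y ht₀.bot_lt hty hy
    _ < y * t := ENNReal.mul_lt_mul_right hy₀ hy.ne ht
    _ = t * y := mul_comm y t

theorem musupp_apply_le_Phi (a : L2R →L[ℂ] L2R) {ξ : L2R} {x : ℝ≥0∞} (hξ : musupp ξ ≤ x) :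
    musupp (a ξ) ≤ Phi a x :=
  le_iSup (fun η : {η : L2R // musupp η ≤ x} => musupp (a η)) ⟨ξ, hξ⟩

theorem Bset_mono {f g : ℝ≥0∞ → ℝ≥0∞} (hfg : f ≤ g) : Bset f ⊆ Bset g :=
  fun _ ha => ⟨fun x => (ha.1 x).trans (hfg x), fun x => (ha.2 x).trans (hfg x)⟩

theorem adjoint_mem_Bset {f : ℝ≥0∞ → ℝ≥0∞} {a : L2R →L[ℂ] L2R} (ha : a ∈ Bset f) :
    ContinuousLinearMap.adjoint a ∈ Bset f :=
  ⟨ha.2, by simpa only [ContinuousLinearMap.adjoint_adjoint] using ha.1⟩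

open ContinuousLinearMap in
theorem musupp_apply_le_sInf_of_mem_Bset {f : ℝ≥0∞ → ℝ≥0∞} (hf : ISOD f) {a : L2R →L[ℂ] L2R}
    (ha : a ∈ Bset f) (ξ : L2R) : musupp (a ξ) ≤ sInf {x | f x < x} := by
  by_contra! hlt
  obtain ⟨t, ht, htξ⟩ := sInf_lt_iff.1 hlt
  obtain ⟨S, hS, hSξ, htS, hS_fin⟩ := Measure.exists_subset_measure_lt_top
    (Lp.stronglyMeasurable (a ξ)).measurableSet_support htξ
  have hfS : f (volume S) < volume S := hf.lt_self_of_le ht htS.le hS_fin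
  obtain ⟨T, hT, hTS, hT_supp⟩ := Lp.exists_measurableSet_forall_support_ae_le
    (LinearMap.range ((adjoint a).toLinearMap ∘ₗ Lp.indicatorₗ ℂ hS)) (hfS.trans hS_fin).ne
    (by
      rintro _ ⟨η, rfl⟩
      exact (musupp_apply_le_Phi _ (measure_mono_ae (Lp.support_indicatorₗ_ae_le hS η))).trans
        (ha.2 _))
  have hdisj := L2.aedisjoint_support_apply_indicatorₗ_compl a hS hT
    (fun η => hT_supp _ ⟨η, rfl⟩) ξ
  have hS_le : volume S ≤ musupp (a (Lp.indicatorₗ ℂ hT ξ)) := by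
    have hsplit : ⇑(a ξ) =ᵐ[volume]
        ⇑(a (Lp.indicatorₗ ℂ hT ξ)) + ⇑(a (Lp.indicatorₗ ℂ hT.compl ξ)) := by
      conv_lhs => rw [← Lp.indicatorₗ_add_indicatorₗ_compl (𝕜 := ℂ) hT ξ, map_add]
      exact Lp.coeFn_add _ _
    refine measure_mono_ae (hdisj.sdiff_ae_eq_left.symm.le.trans ?_)
    filter_upwards [hsplit] with x hx ⟨hxS, hxv⟩
    rw [notMem_support] at hxv
    change x ∈ support _
    simpa [hx, hxv] using hSξ hxS
  have h_le : musupp (a (Lp.indicatorₗ ℂ hT ξ)) ≤ f (f (volume S)) :=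
    (musupp_apply_le_Phi _ ((measure_mono_ae (Lp.support_indicatorₗ_ae_le hT ξ)).trans
      hTS)).trans (ha.1 _)
  exact (hS_le.trans (h_le.trans (hf.1 hfS.le))).not_gt hfS

/-- For ISOD `f` and `r = inf {x : f x < x}` (`∞` if empty, as `sInf ∅ = ⊤`),
one has `B_f = B_{min(f, r)}`. -/
theorem Bset_eq_Bset_min (f : ℝ≥0∞ → ℝ≥0∞) (hf : ISOD f) :
    Bset f = Bset (fun x => min (f x) (sInf {x : ℝ≥0∞ | f x < x})) := by
  refine (Bset_mono fun x => min_le_left _ _).antisymm' fun a ha => ⟨fun x => ?_, fun x => ?_⟩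
  · exact le_min (ha.1 x) (iSup_le fun ξ => musupp_apply_le_sInf_of_mem_Bset hf ha ξ)
  · exact le_min (ha.2 x)
      (iSup_le fun ξ => musupp_apply_le_sInf_of_mem_Bset hf (adjoint_mem_Bset ha) ξ)
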